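/- Let f : ℝ² → ℝ be C² and λ : ℝ² → ℝ be C¹, write {F, G} = ∂_x F · ∂_y G − ∂_y F · ∂_x G for the Jacobian bracket, and let v = (−λ ∂_y f, λ ∂_x f). Then every solution (x(t), y(t)) of the first-order system (ẋ, ẏ) = v(x, y) satisfies: (i) f(x(t), y(t)) is constant (the orbit lies on a level curve f = c); (ii) the second-order Dainelli equations ẍ = −λ² {f, ∂_y f} − λ {f, λ} ∂_y f and ÿ = λ² {f, ∂_x f} + λ {f, λ} ∂_x f, all functions being evaluated at (x(t), y(t)); and (iii) equivalently, (ẍ, ÿ) = ∇(½‖v‖²) − λ ( ∂_x(λ ∂_x f) + ∂_y(λ ∂_y f) ) ∇f evaluated at (x(t), y(t)). -/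

import Mathlib

/-!
Along a solution, the chain rule gives `d/dt g(x(t)) = ∇g · v` for every differentiable `g`.
Since `v = λ J∇f`, with `J` the rotation by a right angle, is orthogonal to `∇f`, the function `f`
is constant along the orbit. Applied to the components of `v`, the chain rule gives
`ẍ = (v·∇)v`; expanding `∂(λ ∂f)` by the product rule yields the Dainelli equations. For the
gradient form, the Lamb identity `(v·∇)v = ∇(½‖v‖²) + (curl v) J v` applies, and here
`curl v = ∂ₓ(λ∂ₓf) + ∂ᵧ(λ∂ᵧf)` and `J v = −λ∇f`.
-/

open Real Set

noncomputable section

/-- Partial derivative in the `k`-th coordinate direction on ℝ². -/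
def pd (k : Fin 2) (f : (Fin 2 → ℝ) → ℝ) (x : Fin 2 → ℝ) : ℝ :=
  fderiv ℝ f x (Pi.single k 1)

/-- Gradient on ℝ². -/
def grad (f : (Fin 2 → ℝ) → ℝ) (x : Fin 2 → ℝ) : Fin 2 → ℝ := fun k => pd k f x

/-- Squared Euclidean norm on ℝ². -/
def nsq (a : Fin 2 → ℝ) : ℝ := ∑ i, a i ^ 2

/-- Jacobian bracket `{F, G} = ∂ₓF ∂ᵧG − ∂ᵧF ∂ₓG`. -/
def br (F g : (Fin 2 → ℝ) → ℝ) (x : Fin 2 → ℝ) : ℝ :=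
  pd 0 F x * pd 1 g x - pd 1 F x * pd 0 g x

section PartialDerivatives

variable {g h : (Fin 2 → ℝ) → ℝ} {X : Fin 2 → ℝ}

lemma fderiv_apply_eq_pd (g : (Fin 2 → ℝ) → ℝ) (X w : Fin 2 → ℝ) :
    fderiv ℝ g X w = pd 0 g X * w 0 + pd 1 g X * w 1 := by
  have hw : w = w 0 • Pi.single 0 1 + w 1 • Pi.single 1 1 := by
    ext i; fin_cases i <;> simp
  conv_lhs => rw [hw]
  simp only [pd, map_add, map_smul, smul_eq_mul]
  ring

lemma DifferentiableAt.hasDerivAt_comp_pd {x : ℝ → Fin 2 → ℝ} {w : Fin 2 → ℝ} {t : ℝ}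
    (hg : DifferentiableAt ℝ g (x t)) (hx : HasDerivAt x w t) :
    HasDerivAt (fun u => g (x u)) (pd 0 g (x t) * w 0 + pd 1 g (x t) * w 1) t := by
  rw [← fderiv_apply_eq_pd]
  exact hg.hasFDerivAt.comp_hasDerivAt t hx

lemma pd_neg (k : Fin 2) : pd k (fun p => -g p) X = -pd k g X := by
  simp [pd, fderiv_fun_neg]

lemma pd_mul (hg : DifferentiableAt ℝ g X) (hh : DifferentiableAt ℝ h X) (k : Fin 2) :
    pd k (fun p => g p * h p) X = pd k g X * h X + g X * pd k h X := by
  simp only [pd, fderiv_fun_mul hg hh, add_apply, smul_apply, smul_eq_mul]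
  ring

lemma differentiable_pd (hg : ContDiff ℝ 2 g) (k : Fin 2) : Differentiable ℝ (pd k g) :=
  ((hg.fderiv_right (m := 1) (by norm_num)).differentiable one_ne_zero).clm_apply
    (differentiable_const _)

end PartialDerivatives

section VectorFields

variable {w : (Fin 2 → ℝ) → Fin 2 → ℝ} {X : Fin 2 → ℝ}

def curl (w : (Fin 2 → ℝ) → Fin 2 → ℝ) (X : Fin 2 → ℝ) : ℝ :=
  pd 0 (fun p => w p 1) X - pd 1 (fun p => w p 0) X

lemma pd_half_nsq (hw : ∀ i, DifferentiableAt ℝ (fun p => w p i) X) (k : Fin 2) :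
    pd k (fun p => 1 / 2 * nsq (w p)) X
      = w X 0 * pd k (fun p => w p 0) X + w X 1 * pd k (fun p => w p 1) X := by
  have hsq : ∀ i, HasFDerivAt (fun p => w p i * w p i)
      (w X i • fderiv ℝ (fun p => w p i) X + w X i • fderiv ℝ (fun p => w p i) X) X :=
    fun i => (hw i).hasFDerivAt.mul (hw i).hasFDerivAt
  have hsum : HasFDerivAt (fun p => 1 / 2 * (w p 0 * w p 0 + w p 1 * w p 1)) _ X :=
    ((hsq 0).add (hsq 1)).const_mul (1 / 2 : ℝ)
  simp only [nsq, Fin.sum_univ_two, sq]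
  rw [pd, hsum.fderiv]
  simp only [pd, add_apply, smul_apply, smul_eq_mul]
  ring

/-- The Lamb identity `(w·∇)w = ∇(½‖w‖²) + (curl w) J w`, with `J` the rotation by a right angle. -/
lemma pd_mul_add_pd_mul_eq_grad_add_curl (hw : ∀ i, DifferentiableAt ℝ (fun p => w p i) X)
    (k : Fin 2) :
    pd 0 (fun p => w p k) X * w X 0 + pd 1 (fun p => w p k) X * w X 1
      = grad (fun p => 1 / 2 * nsq (w p)) X k + curl w X * ![-w X 1, w X 0] k := by
  simp only [grad, pd_half_nsq hw, curl]
  fin_cases k <;>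
    simp only [Fin.zero_eta, Fin.mk_one, Matrix.cons_val_zero, Matrix.cons_val_one,
      Matrix.cons_val_fin_one] <;>
    ring

end VectorFields

lemma apply_eq_of_pd_mul_add_pd_mul_eq_zero {g : (Fin 2 → ℝ) → ℝ} (hg : Differentiable ℝ g)
    {x w : ℝ → Fin 2 → ℝ} {s : Set ℝ} (hs : IsOpen s) (hs' : IsPreconnected s)
    (hx : ∀ t ∈ s, HasDerivAt x (w t) t)
    (horth : ∀ t ∈ s, pd 0 g (x t) * w t 0 + pd 1 g (x t) * w t 1 = 0) :
    ∀ t ∈ s, ∀ t' ∈ s, g (x t) = g (x t') := by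
  have hgx : ∀ t ∈ s, HasDerivAt (fun u => g (x u)) 0 t := fun t ht =>
    horth t ht ▸ (hg _).hasDerivAt_comp_pd (hx t ht)
  exact fun t ht t' ht' => hs.is_const_of_deriv_eq_zero hs'
    (fun u hu => (hgx u hu).differentiableAt.differentiableWithinAt)
    (fun u hu => (hgx u hu).deriv) ht ht'

/-- Dainelli's theorem (formula (21) and form (D1)): every solution of
`(ẋ,ẏ) = v(x,y)` with `v = (−λ∂ᵧf, λ∂ₓf)` lies on a level curve of `f` and satisfies
the second-order Dainelli equations. -/
theorem dainelli
    (f lam : (Fin 2 → ℝ) → ℝ) (hf : ContDiff ℝ 2 f) (hlam : ContDiff ℝ 1 lam)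
    (v : (Fin 2 → ℝ) → (Fin 2 → ℝ))
    (hv : ∀ p, v p = ![-(lam p * pd 1 f p), lam p * pd 0 f p])
    (t₁ t₂ : ℝ) (x : ℝ → (Fin 2 → ℝ))
    (hx : ∀ t ∈ Ioo t₁ t₂, HasDerivAt x (v (x t)) t) :
    -- (i) the orbit lies on a level curve of f
    (∀ t ∈ Ioo t₁ t₂, ∀ s ∈ Ioo t₁ t₂, f (x t) = f (x s)) ∧
    (∀ t ∈ Ioo t₁ t₂,
      -- (ii) the Dainelli second-order equations
      (HasDerivAt (fun u => v (x u) 0)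
        (-(lam (x t)) ^ 2 * br f (fun p => pd 1 f p) (x t)
          - lam (x t) * br f lam (x t) * pd 1 f (x t)) t ∧
      HasDerivAt (fun u => v (x u) 1)
        ((lam (x t)) ^ 2 * br f (fun p => pd 0 f p) (x t)
          + lam (x t) * br f lam (x t) * pd 0 f (x t)) t) ∧
      -- (iii) the equivalent gradient form
      HasDerivAt (fun u => v (x u))
        (fun k => grad (fun p => (1 / 2) * nsq (v p)) (x t) k
          - lam (x t) * (pd 0 (fun p => lam p * pd 0 f p) (x t)
            + pd 1 (fun p => lam p * pd 1 f p) (x t)) * pd k f (x t)) t) := by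
  have hlam' : Differentiable ℝ lam := hlam.differentiable one_ne_zero
  have hfx := differentiable_pd hf 0
  have hfy := differentiable_pd hf 1
  have hv' : ∀ i p, DifferentiableAt ℝ (fun q => v q i) p := by
    intro i p
    simp only [hv]
    fin_cases i
    · exact ((hlam' p).mul (hfy p)).neg
    · exact (hlam' p).mul (hfx p)
  have hvx : ∀ t ∈ Ioo t₁ t₂, ∀ i, HasDerivAt (fun u => v (x u) i)
      (pd 0 (fun p => v p i) (x t) * v (x t) 0 + pd 1 (fun p => v p i) (x t) * v (x t) 1) t :=
    fun t ht i => (hv' i (x t)).hasDerivAt_comp_pd (hx t ht)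
  refine ⟨apply_eq_of_pd_mul_add_pd_mul_eq_zero (hf.differentiable two_ne_zero) isOpen_Ioo
    isPreconnected_Ioo hx fun t _ => ?_, fun t ht => ⟨⟨?_, ?_⟩, ?_⟩⟩
  · simp only [hv, Matrix.cons_val_zero, Matrix.cons_val_one, Matrix.cons_val_fin_one]
    ring
  · refine (hvx t ht 0).congr_deriv ?_
    simp only [br, hv, Matrix.cons_val_zero, Matrix.cons_val_one, Matrix.cons_val_fin_one,
      pd_neg, pd_mul (hlam' _) (hfy _)]
    ring
  · refine (hvx t ht 1).congr_deriv ?_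
    simp only [br, hv, Matrix.cons_val_zero, Matrix.cons_val_one, Matrix.cons_val_fin_one,
      pd_mul (hlam' _) (hfx _)]
    ring
  · refine hasDerivAt_pi.2 fun k => (hvx t ht k).congr_deriv ?_
    rw [pd_mul_add_pd_mul_eq_grad_add_curl (fun i => hv' i _), curl]
    fin_cases k <;>
      simp only [hv, Fin.zero_eta, Fin.mk_one, Matrix.cons_val_zero, Matrix.cons_val_one,
        Matrix.cons_val_fin_one, pd_neg] <;>
      ring
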